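/- arXiv:1505.01312 — 2 statements merged into one kernel-verified Lean document; each statement's English description precedes it below -/
import Mathlib

section
/- Existence criterion for the weighted Moore–Penrose inverse: Let X and Y be complex Banach spaces, let T ∈ L(X,Y), and let E ∈ L(Y) and F ∈ L(X) be invertible positive operators. Then T has a weighted Moore–Penrose inverse T^†_{E,F} if and only if there exist idempotent operators P ∈ L(Y) and Q ∈ L(X) such that P ∈ H(L(Y)^E), Q ∈ H(L(X)^F), R(P) = R(T) and N(Q) = N(T). -/
/-!
Common definitions: hermitian and positive elements of a complex unital Banach
algebra, hermitian elements with respect to the equivalent norm induced by an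
invertible positive element (weight), and the weighted Moore–Penrose inverse,
both for Banach algebra elements and for bounded linear operators between
Banach spaces.
-/

noncomputable section

/-- An element `a` of a complex unital Banach algebra is hermitian if
`‖exp(i t a)‖ = 1` for all real `t`. -/
def IsHermitianEl {A : Type*} [NormedRing A] [NormedAlgebra ℂ A] (a : A) : Prop :=
  ∀ t : ℝ, ‖NormedSpace.exp ((Complex.I * (t : ℂ)) • a)‖ = 1

/-- An element of a complex unital Banach algebra is positive if it is hermitian
and its spectrum is contained in `[0, ∞)`. -/
def IsPositiveEl {A : Type*} [NormedRing A] [NormedAlgebra ℂ A] (a : A) : Prop :=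
  IsHermitianEl a ∧ spectrum ℂ a ⊆ Complex.ofReal '' Set.Ici (0 : ℝ)

/-- `a` is hermitian in `A^u`, i.e. hermitian for the equivalent norm
`‖x‖_u = ‖u^{1/2} x u^{-1/2}‖`, where `u^{1/2}` is the (unique) invertible
positive square root of the invertible positive weight `u`. -/
def IsHermitianWt {A : Type*} [NormedRing A] [NormedAlgebra ℂ A] (u a : A) : Prop :=
  ∃ s : Aˣ, IsPositiveEl (s : A) ∧ ((s : A)) ^ 2 = u ∧
    ∀ t : ℝ, ‖(s : A) * NormedSpace.exp ((Complex.I * (t : ℂ)) • a) * ((s⁻¹ : Aˣ) : A)‖ = 1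

/-- `b` is the weighted Moore–Penrose inverse of `a` with weights `e` and `f`. -/
def IsWMPI {A : Type*} [NormedRing A] [NormedAlgebra ℂ A] (e f a b : A) : Prop :=
  a * b * a = a ∧ b * a * b = b ∧ IsHermitianWt e (a * b) ∧ IsHermitianWt f (b * a)

/-- `a` is weighted EP with weights `e` and `f`. -/
def IsWEP {A : Type*} [NormedRing A] [NormedAlgebra ℂ A] (e f a : A) : Prop :=
  ∃ b : A, IsWMPI e f a b ∧ a * b = b * a

/-- `S ∈ L(Y,X)` is the weighted Moore–Penrose inverse of `T ∈ L(X,Y)` with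
weights `E ∈ L(Y)` and `F ∈ L(X)`. -/
def IsWMPIop {X Y : Type*} [NormedAddCommGroup X] [NormedSpace ℂ X]
    [NormedAddCommGroup Y] [NormedSpace ℂ Y]
    (E : Y →L[ℂ] Y) (F : X →L[ℂ] X) (T : X →L[ℂ] Y) (S : Y →L[ℂ] X) : Prop :=
  (T.comp S).comp T = T ∧ (S.comp T).comp S = S ∧
    IsHermitianWt E (T.comp S) ∧ IsHermitianWt F (S.comp T)

/-- `T ∈ L(X)` is weighted EP with weights `E` and `F`. -/
def IsWEPop {X : Type*} [NormedAddCommGroup X] [NormedSpace ℂ X]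
    (E F T : X →L[ℂ] X) : Prop :=
  ∃ S : X →L[ℂ] X, IsWMPIop E F T S ∧ T.comp S = S.comp T

/-!
Given `S`, the idempotents `T S` and `S T` have the required range and kernel. Conversely, `T`
maps the closed subspace `R(Q)` injectively onto `R(T) = R(P)`, which is closed, so by the open
mapping theorem this restriction has a bounded inverse; composing it with `P` gives `S` with
`T S = P` and `S T = Q`, and the weighted hermitian conditions are then exactly those on `P`, `Q`.
-/

namespace ContinuousLinearMap

section Algebraic

variable {R M N : Type*} [Ring R] [TopologicalSpace M] [AddCommGroup M] [Module R M]
  [TopologicalSpace N] [AddCommGroup N] [Module R N] {T : M →L[R] N} {S : N →L[R] M}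

theorem isIdempotentElem_comp_of_comp_comp_eq_self (h : (T ∘L S) ∘L T = T) :
    IsIdempotentElem (T ∘L S) :=
  congrArg (· ∘L S) h

theorem isIdempotentElem_comp_of_comp_comp_eq_self' (h : (T ∘L S) ∘L T = T) :
    IsIdempotentElem (S ∘L T) :=
  congrArg (S ∘L ·) h

theorem range_comp_of_comp_comp_eq_self (h : (T ∘L S) ∘L T = T) :
    Set.range (T ∘L S) = Set.range T := by
  refine subset_antisymm (Set.range_comp_subset_range S T) ?_
  rintro _ ⟨x, rfl⟩
  exact ⟨T x, congrArg (· x) h⟩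

theorem ker_comp_of_comp_comp_eq_self (h : (T ∘L S) ∘L T = T) :
    LinearMap.ker (S ∘L T : M →ₗ[R] M) = LinearMap.ker (T : M →ₗ[R] N) := by
  refine le_antisymm (fun x (hx : S (T x) = 0) => ?_) (LinearMap.ker_le_ker_comp _ _)
  change T x = 0
  rw [← congrArg (· x) h]
  exact congrArg T hx |>.trans (map_zero T)

theorem comp_eq_self_of_range_subset {P : N →L[R] N} (hP : IsIdempotentElem P)
    (h : Set.range T ⊆ Set.range P) : P ∘L T = T := by
  ext x
  obtain ⟨y, hy⟩ := h ⟨x, rfl⟩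
  simp only [comp_apply, ← hy]
  exact congrArg (· y) hP

theorem comp_eq_self_of_ker_le {Q : M →L[R] M} (hQ : IsIdempotentElem Q)
    (h : LinearMap.ker (Q : M →ₗ[R] M) ≤ LinearMap.ker (T : M →ₗ[R] N)) : T ∘L Q = T := by
  ext x
  have hx : x - Q x ∈ LinearMap.ker (Q : M →ₗ[R] M) := by
    simp [LinearMap.mem_ker, map_sub, show Q (Q x) = Q x from congrArg (· x) hQ]
  have hTx : T (x - Q x) = 0 := h hx
  rw [map_sub, sub_eq_zero] at hTx
  exact hTx.symm

end Algebraic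

section Banach

variable {𝕜 X Y : Type*} [NontriviallyNormedField 𝕜]
  [NormedAddCommGroup X] [NormedSpace 𝕜 X] [NormedAddCommGroup Y] [NormedSpace 𝕜 Y]

theorem injective_comp_subtypeL_range {T : X →L[𝕜] Y} {Q : X →L[𝕜] X} (hQ : IsIdempotentElem Q)
    (h : LinearMap.ker (T : X →ₗ[𝕜] Y) ≤ LinearMap.ker (Q : X →ₗ[𝕜] X)) :
    Function.Injective (T ∘L (LinearMap.range (Q : X →ₗ[𝕜] X)).subtypeL) := by
  refine (injective_iff_map_eq_zero _).2 ?_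
  rintro ⟨x, hx⟩ (hTx : T x = 0)
  refine Subtype.ext ?_
  calc x = Q x :=
        ((LinearMap.IsIdempotentElem.mem_range_iff (IsIdempotentElem.toLinearMap hQ)).1 hx).symm
    _ = 0 := h hTx

variable [CompleteSpace X] [CompleteSpace Y]

theorem exists_comp_eq_of_range_eq_of_ker_eq {T : X →L[𝕜] Y} {P : Y →L[𝕜] Y} {Q : X →L[𝕜] X}
    (hP : IsIdempotentElem P) (hQ : IsIdempotentElem Q) (hPT : Set.range P = Set.range T)
    (hQT : LinearMap.ker (Q : X →ₗ[𝕜] X) = LinearMap.ker (T : X →ₗ[𝕜] Y)) :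
    ∃ S : Y →L[𝕜] X, T ∘L S = P ∧ S ∘L T = Q ∧ Q ∘L S = S := by
  set K := LinearMap.range (Q : X →ₗ[𝕜] X)
  have : CompleteSpace K := (IsIdempotentElem.isClosed_range hQ).completeSpace_coe
  have hTQ : T ∘L Q = T := comp_eq_self_of_ker_le hQ hQT.le
  set f : K →L[𝕜] Y := T ∘L K.subtypeL
  have hf_range : Set.range f = Set.range T := by
    refine subset_antisymm (Set.range_comp_subset_range _ T) ?_
    rintro _ ⟨x, rfl⟩
    exact ⟨⟨Q x, x, rfl⟩, congrArg (· x) hTQ⟩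
  have hf_closed : IsClosed (Set.range f) := hf_range ▸ hPT ▸ IsIdempotentElem.isClosed_range hP
  have hf_inj : Function.Injective f := injective_comp_subtypeL_range hQ hQT.ge
  set e := f.equivRange hf_inj hf_closed
  have hPf : ∀ y, P y ∈ LinearMap.range (f : K →ₗ[𝕜] Y) := fun y =>
    (hf_range.trans hPT.symm).ge ⟨y, rfl⟩
  refine ⟨K.subtypeL ∘L (e.symm : _ →L[𝕜] K) ∘L P.codRestrict _ hPf, ?_, ?_, ?_⟩
  · ext y
    exact congrArg Subtype.val (e.apply_symm_apply _)
  · ext x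
    have hPTx : P.codRestrict _ hPf (T x) = ⟨f ⟨Q x, x, rfl⟩, LinearMap.mem_range_self _ _⟩ :=
      Subtype.ext <| (congrArg (· x) (comp_eq_self_of_range_subset hP hPT.ge)).trans
        (congrArg (· x) hTQ).symm
    show ((e.symm (P.codRestrict _ hPf (T x)) : K) : X) = Q x
    rw [hPTx, equivRange_symm_apply]
  · ext y
    exact (LinearMap.IsIdempotentElem.mem_range_iff (IsIdempotentElem.toLinearMap hQ)).1 (e.symm _).2

end Banach

end ContinuousLinearMap

open ContinuousLinearMap

theorem weighted_MP_inverse_exists_iff_general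
    {X Y : Type*} [NormedAddCommGroup X] [NormedSpace ℂ X] [CompleteSpace X]
    [NormedAddCommGroup Y] [NormedSpace ℂ Y] [CompleteSpace Y]
    (E : Y →L[ℂ] Y) (F : X →L[ℂ] X)
    (T : X →L[ℂ] Y) :
    (∃ S : Y →L[ℂ] X, IsWMPIop E F T S) ↔
      ∃ (P : Y →L[ℂ] Y) (Q : X →L[ℂ] X),
        P.comp P = P ∧ Q.comp Q = Q ∧ IsHermitianWt E P ∧ IsHermitianWt F Q ∧
        Set.range ⇑P = Set.range ⇑T ∧ LinearMap.ker (Q : X →ₗ[ℂ] X) = LinearMap.ker (T : X →ₗ[ℂ] Y) := by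
  constructor
  · rintro ⟨S, hTST, -, hTS, hST⟩
    exact ⟨T.comp S, S.comp T, isIdempotentElem_comp_of_comp_comp_eq_self hTST,
      isIdempotentElem_comp_of_comp_comp_eq_self' hTST, hTS, hST,
      range_comp_of_comp_comp_eq_self hTST, ker_comp_of_comp_comp_eq_self hTST⟩
  · rintro ⟨P, Q, hP, hQ, hPE, hQF, hPT, hQT⟩
    obtain ⟨S, hTS, hST, hQS⟩ := exists_comp_eq_of_range_eq_of_ker_eq hP hQ hPT hQT
    refine ⟨S, ?_, ?_, hTS ▸ hPE, hST ▸ hQF⟩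
    · rw [hTS]
      exact comp_eq_self_of_range_subset hP hPT.ge
    · rw [hST]
      exact hQS

/-- **Existence criterion for the weighted Moore–Penrose inverse.**
`T` has a weighted Moore–Penrose inverse `T^†_{E,F}` iff there exist
idempotents `P ∈ H(L(Y)^E)` and `Q ∈ H(L(X)^F)` with `R(P) = R(T)` and
`N(Q) = N(T)`. -/
theorem weighted_MP_inverse_exists_iff
    {X Y : Type*} [NormedAddCommGroup X] [NormedSpace ℂ X] [CompleteSpace X]
    [NormedAddCommGroup Y] [NormedSpace ℂ Y] [CompleteSpace Y]
    (E : Y →L[ℂ] Y) (F : X →L[ℂ] X)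
    (hE : IsPositiveEl E ∧ IsUnit E) (hF : IsPositiveEl F ∧ IsUnit F)
    (T : X →L[ℂ] Y) :
    (∃ S : Y →L[ℂ] X, IsWMPIop E F T S) ↔
      ∃ (P : Y →L[ℂ] Y) (Q : X →L[ℂ] X),
        P.comp P = P ∧ Q.comp Q = Q ∧ IsHermitianWt E P ∧ IsHermitianWt F Q ∧
        Set.range ⇑P = Set.range ⇑T ∧ LinearMap.ker (Q : X →ₗ[ℂ] X) = LinearMap.ker (T : X →ₗ[ℂ] Y) :=
  weighted_MP_inverse_exists_iff_general E F T
end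
end

section
/- Reverse order law for the factorization T = BC: Let X and Y be complex Banach spaces, let E, H ∈ L(X) and F ∈ L(Y) be invertible positive operators, let T ∈ L(X) be such that T^†_{E,H} exists, and suppose there exist a surjective C ∈ L(X,Y) and an injective B ∈ L(Y,X) with T = B C (so that B^†_{E,F} and C^†_{F,H} exist). Then T^†_{E,H} = C^†_{F,H} B^†_{E,F}, T T^†_{E,H} = B B^†_{E,F}, T^†_{E,H} T = C^†_{F,H} C, B^†_{E,F} = C T^†_{E,H}, C^†_{F,H} = T^†_{E,H} B, T C^†_{F,H} = B and B^†_{E,F} T = C. -/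
/-!
Common definitions: hermitian and positive elements of a complex unital Banach
algebra, hermitian elements with respect to the equivalent norm induced by an
invertible positive element (weight), and the weighted Moore–Penrose inverse,
both for Banach algebra elements and for bounded linear operators between
Banach spaces.
-/

noncomputable section

/-!
Write `p = T T†` and `q = B B†`: idempotents that are hermitian for the same weighted norm
`‖E^{1/2} · E^{-1/2}‖`. Since `T = B C` with `C` surjective they have the same range, so
`p q = q` and `q p = p`; in particular `p q + q p = p + q`, i.e. `(p - q)² = 0`. At `t = π`,
`exp(i t e) = 1 - 2e` for an idempotent `e`, so `1 - 2p` and `1 - 2q` have weighted norm one and `(1 - 2p)(1 - 2q) = 1 + 2(pq - qp)` has weighted norm at most one,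
while `pq - qp` squares to zero. A power-bounded `1 + d` with `d² = 0` forces `d = 0`, so `p = q`.
The same argument with kernels gives `T† T = C† C`, and the remaining identities follow from these
two by the Moore–Penrose equations. The weighted norm does not depend on the choice of square
root, since an invertible square root with spectrum in `[0, ∞)` is unique: two of them solve the
Sylvester equation `s x + x r = 0` with `x = s - r`, and Gelfand's formula forces `x = 0`.
-/

open Filter Topology

section Ring

variable {R : Type*} [Ring R] {p q : R}

theorem one_sub_two_mul_mul_one_sub_two_mul (hpq : p * q + q * p = p + q) :
    (1 - 2 * p) * (1 - 2 * q) = 1 + 2 * (p * q - q * p) := by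
  calc (1 - 2 * p) * (1 - 2 * q) = 1 - 2 * (p + q) + 4 * (p * q) := by noncomm_ring
    _ = 1 + 2 * (p * q - q * p) := by rw [← hpq]; noncomm_ring

namespace IsIdempotentElem

theorem mul_mul_self_of_mul_add_mul (hp : IsIdempotentElem p) (hpq : p * q + q * p = p + q) :
    p * q * p = p := by
  have h := congrArg (p * ·) hpq
  simp only [mul_add, ← mul_assoc, hp.eq] at h
  exact add_left_cancel (h.trans (add_comm _ _))

theorem commutator_mul_self_of_mul_add_mul (hp : IsIdempotentElem p) (hq : IsIdempotentElem q)
    (hpq : p * q + q * p = p + q) : (p * q - q * p) * (p * q - q * p) = 0 := by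
  have hpqp := hp.mul_mul_self_of_mul_add_mul hpq
  have hqpq := hq.mul_mul_self_of_mul_add_mul (by rw [add_comm, hpq, add_comm])
  calc (p * q - q * p) * (p * q - q * p)
      = (p * q * p) * q - p * (q * q) * p - q * (p * p) * q + (q * p * q) * p := by noncomm_ring
    _ = p * q + q * p - (p + q) := by rw [hpqp, hqpq, hp.eq, hq.eq, hpqp, hqpq]; abel
    _ = 0 := sub_eq_zero.mpr hpq

theorem eq_of_commute_of_mul_add_mul (hp : IsIdempotentElem p) (hq : IsIdempotentElem q)
    (hpq : p * q + q * p = p + q) (h : p * q = q * p) : p = q := by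
  calc p = p * q * p := (hp.mul_mul_self_of_mul_add_mul hpq).symm
    _ = q * p := by rw [h, mul_assoc, hp.eq]
    _ = q * (p * q) := by rw [h, ← mul_assoc, hq.eq]
    _ = q := by rw [← mul_assoc, hq.mul_mul_self_of_mul_add_mul (by rw [add_comm, hpq, add_comm])]

end IsIdempotentElem

end Ring

theorem eq_zero_of_mul_self_eq_zero_of_norm_one_add_le_one {A : Type*} [NormedRing A]
    [NormedSpace ℝ A] {d : A} (hd : d * d = 0) (h : ‖1 + d‖ ≤ 1) : d = 0 := by
  have hpow : ∀ n : ℕ, (1 + d) ^ n = 1 + n • d := by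
    intro n
    induction n with
    | zero => simp
    | succ n ih =>
      rw [pow_succ, ih, add_mul, one_mul, mul_add, mul_one, smul_mul_assoc, hd, smul_zero,
        add_zero, succ_nsmul]
      abel
  have hbound : ∀ n : ℕ, (n + 1) * ‖d‖ ≤ 1 + ‖(1 : A)‖ := by
    intro n
    calc (n + 1) * ‖d‖ = ‖(1 + d) ^ (n + 1) - 1‖ := by
          rw [hpow, add_sub_cancel_left, RCLike.norm_nsmul ℝ]; ring
      _ ≤ ‖(1 + d) ^ (n + 1)‖ + ‖(1 : A)‖ := norm_sub_le _ _
      _ ≤ ‖1 + d‖ ^ (n + 1) + ‖(1 : A)‖ := by gcongr; exact norm_pow_le' _ n.succ_pos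
      _ ≤ 1 + ‖(1 : A)‖ := by gcongr; exact pow_le_one₀ (norm_nonneg _) h
  by_contra hne
  obtain ⟨n, hn⟩ := exists_nat_gt ((1 + ‖(1 : A)‖) / ‖d‖)
  rw [div_lt_iff₀ (norm_pos_iff.mpr hne)] at hn
  nlinarith [hbound n, norm_nonneg d]

section BanachAlgebra

variable {A : Type*} [NormedRing A] [NormedAlgebra ℂ A]

theorem Units.spectrum_subset_ofReal_Ioi {s : Aˣ}
    (hs : spectrum ℂ (s : A) ⊆ Complex.ofReal '' Set.Ici 0) :
    spectrum ℂ (s : A) ⊆ Complex.ofReal '' Set.Ioi 0 := by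
  rintro _ hz
  obtain ⟨t, ht, rfl⟩ := hs hz
  refine ⟨t, Set.mem_Ioi.mpr (lt_of_le_of_ne ht ?_), rfl⟩
  rintro rfl
  exact spectrum.zero_notMem ℂ s.isUnit (by rwa [Complex.ofReal_zero] at hz)

variable [CompleteSpace A]

theorem tendsto_pow_atTop_nhds_zero_of_spectrum_subset_ball {a : A}
    (ha : spectrum ℂ a ⊆ Metric.ball 0 1) : Tendsto (a ^ ·) atTop (𝓝 0) := by
  rcases subsingleton_or_nontrivial A with hA | hA
  · simpa only [Subsingleton.elim _ (0 : A)] using tendsto_const_nhds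
  have hρ : spectralRadius ℂ a < 1 := by
    simpa using spectrum.spectralRadius_lt_of_forall_lt a (r := 1) fun z hz => by
      simpa [← NNReal.coe_lt_coe] using ha hz
  obtain ⟨c, hρc, hc1⟩ := ENNReal.lt_iff_exists_nnreal_btwn.mp hρ
  have hpow : ∀ᶠ n : ℕ in atTop, ‖a ^ n‖ ≤ c ^ n := by
    filter_upwards [(spectrum.pow_nnnorm_pow_one_div_tendsto_nhds_spectralRadius a).eventually
      (gt_mem_nhds hρc), eventually_ge_atTop 1] with n hn hn1
    have hn0 : (0 : ℝ) < n := by exact_mod_cast hn1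
    rw [one_div, ENNReal.rpow_inv_lt_iff hn0, ENNReal.rpow_natCast] at hn
    exact_mod_cast hn.le
  exact squeeze_zero_norm' hpow (tendsto_pow_atTop_nhds_zero_of_lt_one c.2 (by exact_mod_cast hc1))

theorem eq_zero_of_mul_mul_eq_self_of_spectrum_subset_ball {a b x : A}
    (ha : spectrum ℂ a ⊆ Metric.ball 0 1) (hb : spectrum ℂ b ⊆ Metric.ball 0 1)
    (h : a * x * b = x) : x = 0 := by
  have hiter : ∀ n : ℕ, a ^ n * x * b ^ n = x := by
    intro n
    induction n with
    | zero => simp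
    | succ n ih =>
      calc a ^ (n + 1) * x * b ^ (n + 1) = a ^ n * (a * x * b) * b ^ n := by
            rw [pow_succ, pow_succ']; simp only [mul_assoc]
        _ = x := by rw [h, ih]
  have hlim : Tendsto (fun n : ℕ => a ^ n * x * b ^ n) atTop (𝓝 (0 * x * 0)) :=
    ((tendsto_pow_atTop_nhds_zero_of_spectrum_subset_ball ha).mul_const x).mul
      (tendsto_pow_atTop_nhds_zero_of_spectrum_subset_ball hb)
  simp only [hiter, mul_zero] at hlim
  exact tendsto_nhds_unique tendsto_const_nhds hlim

theorem spectrum_one_add_smul [Nontrivial A] (c : ℂ) (a : A) :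
    spectrum ℂ (1 + c • a) = (fun z => 1 + c * z) '' spectrum ℂ a := by
  convert spectrum.map_polynomial_aeval a (1 + Polynomial.C c * Polynomial.X) using 2 <;>
    simp [Algebra.smul_def]

theorem exists_pos_spectrum_one_sub_smul_subset_ball [Nontrivial A] {a : A}
    (ha : spectrum ℂ a ⊆ Complex.ofReal '' Set.Ioi 0) :
    ∃ c : ℝ, 0 < c ∧ spectrum ℂ (1 - (c : ℂ) • a) ⊆ Metric.ball 0 1 := by
  set c : ℝ := (‖a‖ * ‖(1 : A)‖ + 1)⁻¹ with hc_def
  have hc : 0 < c := by positivity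
  refine ⟨c, hc, ?_⟩
  rw [sub_eq_add_neg, ← neg_smul, spectrum_one_add_smul]
  rintro _ ⟨z, hz, rfl⟩
  obtain ⟨t, ht, rfl⟩ := ha hz
  have hct : c * t < 1 := by
    have := spectrum.norm_le_norm_mul_of_mem hz
    rw [Complex.norm_real, Real.norm_of_nonneg (le_of_lt ht)] at this
    rw [hc_def, inv_mul_lt_one₀ (by positivity)]
    linarith
  have hct0 : 0 < c * t := mul_pos hc ht
  simp only [mem_ball_zero_iff]
  rw [show (1 : ℂ) + -c * t = ((1 - c * t : ℝ) : ℂ) by push_cast; ring,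
    Complex.norm_real, Real.norm_of_nonneg (by linarith)]
  linarith

theorem exists_unit_one_add_smul_spectrum_inv_subset_ball [Nontrivial A] {a : A} {c : ℝ}
    (hc : 0 < c) (ha : spectrum ℂ a ⊆ Complex.ofReal '' Set.Ioi 0) :
    ∃ b : Aˣ, (b : A) = 1 + (c : ℂ) • a ∧ spectrum ℂ (↑b⁻¹ : A) ⊆ Metric.ball 0 1 := by
  have hmem : ∀ z ∈ spectrum ℂ (1 + (c : ℂ) • a), ∃ t : ℝ, 1 < t ∧ z = t := by
    rw [spectrum_one_add_smul]
    rintro _ ⟨z, hz, rfl⟩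
    obtain ⟨t, ht, rfl⟩ := ha hz
    exact ⟨1 + c * t, by linarith [mul_pos hc (Set.mem_Ioi.mp ht)], by push_cast; ring⟩
  obtain ⟨b, hb⟩ : IsUnit (1 + (c : ℂ) • a) := by
    refine spectrum.isUnit_of_zero_notMem ℂ fun h0 => ?_
    obtain ⟨t, ht, h0⟩ := hmem 0 h0
    have : t = 0 := by exact_mod_cast h0.symm
    linarith
  refine ⟨b, hb, ?_⟩
  rw [← spectrum.map_inv, hb]
  intro z hz
  obtain ⟨t, ht, hzt⟩ := hmem _ hz
  rw [mem_ball_zero_iff, ← inv_inv z, norm_inv, hzt, Complex.norm_real,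
    Real.norm_of_nonneg (by linarith)]
  exact inv_lt_one_of_one_lt₀ ht

theorem Units.eq_of_sq_eq_of_spectrum_subset {s r : Aˣ}
    (hs : spectrum ℂ (s : A) ⊆ Complex.ofReal '' Set.Ici 0)
    (hr : spectrum ℂ (r : A) ⊆ Complex.ofReal '' Set.Ici 0)
    (h : (s : A) ^ 2 = (r : A) ^ 2) : s = r := by
  rcases subsingleton_or_nontrivial A with hA | hA
  · exact Units.ext (Subsingleton.elim _ _)
  obtain ⟨c, hc, hσa⟩ := exists_pos_spectrum_one_sub_smul_subset_ball
    (Units.spectrum_subset_ofReal_Ioi hs)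
  obtain ⟨b, hb, hσb⟩ := exists_unit_one_add_smul_spectrum_inv_subset_ball hc
    (Units.spectrum_subset_ofReal_Ioi hr)
  -- `s (s - r) = - (s - r) r` because `s² = r²`; shifting makes the spectra lie in the unit disc.
  have hsylvester : (1 - (c : ℂ) • (s : A)) * (s - r) * (↑b⁻¹ : A) = s - r := by
    rw [Units.mul_inv_eq_iff_eq_mul, hb]
    rw [sq, sq] at h
    simp only [mul_add, mul_sub, sub_mul, one_mul, mul_one, smul_mul_assoc, mul_smul_comm, h]
    module
  exact Units.ext (sub_eq_zero.mp
    (eq_zero_of_mul_mul_eq_self_of_spectrum_subset_ball hσa hσb hsylvester))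

theorem exp_smul_of_isIdempotentElem {p : A} (hp : IsIdempotentElem p) (z : ℂ) :
    NormedSpace.exp (z • p) = 1 - p + Complex.exp z • p := by
  classical
  have hser : HasSum (Function.update (fun n : ℕ => ((n.factorial : ℂ)⁻¹ * z ^ n) • p) 0 1)
      (1 - p + Complex.exp z • p) := by
    have := ((NormedSpace.exp_series_hasSum_exp' (𝕂 := ℂ) z).smul_const p).update 0 1
    simpa [Complex.exp_eq_exp_ℂ] using this
  refine (NormedSpace.exp_series_hasSum_exp' (𝕂 := ℂ) (z • p)).unique (hser.congr_fun ?_)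
  rintro (_ | n)
  · simp
  · simp [smul_pow, hp.pow_succ_eq, smul_smul]

theorem IsHermitianWt.eq_of_isIdempotentElem {u p q : A} (hup : IsHermitianWt u p)
    (huq : IsHermitianWt u q) (hp : IsIdempotentElem p) (hq : IsIdempotentElem q)
    (hpq : p * q + q * p = p + q) : p = q := by
  obtain ⟨s, hs, rfl, hsp⟩ := hup
  obtain ⟨r, hr, hrs, hrq⟩ := huq
  obtain rfl : s = r := Units.eq_of_sq_eq_of_spectrum_subset hs.2 hr.2 hrs.symm
  have hreflect : ∀ e : A, IsIdempotentElem e →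
      NormedSpace.exp ((Complex.I * (Real.pi : ℂ)) • e) = 1 - 2 * e := by
    intro e he
    rw [exp_smul_of_isIdempotentElem he, mul_comm, Complex.exp_pi_mul_I, neg_one_smul, two_mul]
    abel
  set d : A := 2 * (p * q - q * p)
  have hd : d * d = 0 := by
    simp only [d, two_mul, add_mul, mul_add,
      hp.commutator_mul_self_of_mul_add_mul hq hpq, add_zero]
  have hconj : ‖(s : A) * (1 + d) * (↑s⁻¹ : A)‖ ≤ 1 :=
    calc ‖(s : A) * (1 + d) * (↑s⁻¹ : A)‖
        = ‖((s : A) * (1 - 2 * p) * (↑s⁻¹ : A)) * ((s : A) * (1 - 2 * q) * (↑s⁻¹ : A))‖ := by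
          rw [← one_sub_two_mul_mul_one_sub_two_mul hpq]
          simp only [mul_assoc, Units.inv_mul_cancel_left]
      _ ≤ ‖(s : A) * (1 - 2 * p) * (↑s⁻¹ : A)‖ * ‖(s : A) * (1 - 2 * q) * (↑s⁻¹ : A)‖ :=
          norm_mul_le _ _
      _ = 1 := by rw [← hreflect p hp, ← hreflect q hq, hsp, hrq, one_mul]
  have hd0 : (s : A) * d * (↑s⁻¹ : A) = 0 := by
    refine eq_zero_of_mul_self_eq_zero_of_norm_one_add_le_one ?_ ?_
    · simp only [mul_assoc, Units.inv_mul_cancel_left]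
      rw [← mul_assoc d, hd, zero_mul, mul_zero]
    · rwa [mul_add, add_mul, mul_one, Units.mul_inv] at hconj
  have hcomm : (2 : ℂ) • (p * q - q * p) = 0 := by
    rw [Units.mul_left_eq_zero, Units.mul_right_eq_zero] at hd0
    rwa [two_smul, ← two_mul]
  exact hp.eq_of_commute_of_mul_add_mul hq hpq
    (sub_eq_zero.mp ((smul_eq_zero.mp hcomm).resolve_left two_ne_zero))

end BanachAlgebra

namespace IsWMPIop

open ContinuousLinearMap

variable {X Y Z : Type*} [NormedAddCommGroup X] [NormedSpace ℂ X] [NormedAddCommGroup Y]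
  [NormedSpace ℂ Y] [NormedAddCommGroup Z] [NormedSpace ℂ Z]

section

variable {E : Y →L[ℂ] Y} {F : X →L[ℂ] X} {T : X →L[ℂ] Y} {S : Y →L[ℂ] X}

theorem isIdempotentElem_comp (h : IsWMPIop E F T S) : IsIdempotentElem (T.comp S) := by
  rw [IsIdempotentElem, mul_def, ← comp_assoc, h.1]

theorem isIdempotentElem_comp' (h : IsWMPIop E F T S) : IsIdempotentElem (S.comp T) := by
  rw [IsIdempotentElem, mul_def, ← comp_assoc, h.2.1]

theorem comp_eq_id_of_injective (h : IsWMPIop E F T S) (hT : Function.Injective T) :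
    S.comp T = .id ℂ X := by
  ext x
  exact hT (congrArg (· x) h.1)

theorem comp_eq_id_of_surjective (h : IsWMPIop E F T S) (hT : Function.Surjective T) :
    T.comp S = .id ℂ Y := by
  ext y
  obtain ⟨x, rfl⟩ := hT y
  exact congrArg (· x) h.1

end

theorem comp_eq_comp_of_range_eq [CompleteSpace Z] {E : Z →L[ℂ] Z} {F : X →L[ℂ] X}
    {F' : Y →L[ℂ] Y} {T : X →L[ℂ] Z} {S : Z →L[ℂ] X} {B : Y →L[ℂ] Z} {S' : Z →L[ℂ] Y}
    (hT : IsWMPIop E F T S) (hB : IsWMPIop E F' B S')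
    (hTB : ∃ U : X →L[ℂ] Y, T = B.comp U) (hBT : ∃ V : Y →L[ℂ] X, B = T.comp V) :
    T.comp S = B.comp S' := by
  obtain ⟨U, hU⟩ := hTB
  obtain ⟨V, hV⟩ := hBT
  refine hT.2.2.1.eq_of_isIdempotentElem hB.2.2.1 hT.isIdempotentElem_comp
    hB.isIdempotentElem_comp ?_
  have h1 : (T.comp S).comp (B.comp S') = B.comp S' := by
    rw [hV]; simp only [← comp_assoc, hT.1]
  have h2 : (B.comp S').comp (T.comp S) = T.comp S := by
    rw [hU]; simp only [← comp_assoc, hB.1]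
  rw [mul_def, mul_def, h1, h2, add_comm]

theorem comp_eq_comp_of_ker_eq [CompleteSpace X] {E : Z →L[ℂ] Z} {E' : Y →L[ℂ] Y}
    {F : X →L[ℂ] X} {T : X →L[ℂ] Z} {S : Z →L[ℂ] X} {C : X →L[ℂ] Y} {S' : Y →L[ℂ] X}
    (hT : IsWMPIop E F T S) (hC : IsWMPIop E' F C S')
    (hTC : ∃ U : Y →L[ℂ] Z, T = U.comp C) (hCT : ∃ V : Z →L[ℂ] Y, C = V.comp T) :
    S.comp T = S'.comp C := by
  obtain ⟨U, hU⟩ := hTC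
  obtain ⟨V, hV⟩ := hCT
  refine hT.2.2.2.eq_of_isIdempotentElem hC.2.2.2 hT.isIdempotentElem_comp'
    hC.isIdempotentElem_comp' ?_
  have h1 : (S.comp T).comp (S'.comp C) = S.comp T := by
    rw [hU]; simp only [comp_assoc, ← comp_assoc C, hC.1]
  have h2 : (S'.comp C).comp (S.comp T) = S'.comp C := by
    rw [hV]; simp only [comp_assoc, ← comp_assoc T, hT.1]
  rw [mul_def, mul_def, h1, h2]

end IsWMPIop

theorem factorization_BC_reverse_order_law_general
    {X Y : Type*} [NormedAddCommGroup X] [NormedSpace ℂ X] [CompleteSpace X]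
    [NormedAddCommGroup Y] [NormedSpace ℂ Y]
    (E H : X →L[ℂ] X) (F : Y →L[ℂ] Y)
    (T : X →L[ℂ] X) (C : X →L[ℂ] Y) (B : Y →L[ℂ] X)
    (hC : Function.Surjective C) (hB : Function.Injective B)
    (hBC : T = B.comp C)
    (ST : X →L[ℂ] X) (hST : IsWMPIop E H T ST)
    (SB : X →L[ℂ] Y) (hSB : IsWMPIop E F B SB)
    (SC : Y →L[ℂ] X) (hSC : IsWMPIop F H C SC) :
    ST = SC.comp SB ∧ T.comp ST = B.comp SB ∧ ST.comp T = SC.comp C ∧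
    SB = C.comp ST ∧ SC = ST.comp B ∧ T.comp SC = B ∧ SB.comp T = C := by
  have hTSC : T.comp SC = B := by
    rw [hBC, ContinuousLinearMap.comp_assoc, hSC.comp_eq_id_of_surjective hC,
      ContinuousLinearMap.comp_id]
  have hSBT : SB.comp T = C := by
    rw [hBC, ← ContinuousLinearMap.comp_assoc, hSB.comp_eq_id_of_injective hB,
      ContinuousLinearMap.id_comp]
  have hran : T.comp ST = B.comp SB :=
    hST.comp_eq_comp_of_range_eq hSB ⟨C, hBC⟩ ⟨SC, hTSC.symm⟩
  have hker : ST.comp T = SC.comp C :=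
    hST.comp_eq_comp_of_ker_eq hSC ⟨B, hBC⟩ ⟨SB, hSBT.symm⟩
  have hSB_eq : SB = C.comp ST := by
    rw [← hSB.2.1, ContinuousLinearMap.comp_assoc, ← hran, ← ContinuousLinearMap.comp_assoc, hSBT]
  refine ⟨?_, hran, hker, hSB_eq, ?_, hTSC, hSBT⟩
  · rw [← hST.2.1, hker, ContinuousLinearMap.comp_assoc, ← hSB_eq]
  · rw [← hSC.2.1, ← hker, ContinuousLinearMap.comp_assoc, hTSC]

/-- **Reverse order law for the factorization `T = B C`.** -/
theorem factorization_BC_reverse_order_law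
    {X Y : Type*} [NormedAddCommGroup X] [NormedSpace ℂ X] [CompleteSpace X]
    [NormedAddCommGroup Y] [NormedSpace ℂ Y] [CompleteSpace Y]
    (E H : X →L[ℂ] X) (F : Y →L[ℂ] Y)
    (hE : IsPositiveEl E ∧ IsUnit E) (hH : IsPositiveEl H ∧ IsUnit H)
    (hF : IsPositiveEl F ∧ IsUnit F)
    (T : X →L[ℂ] X) (C : X →L[ℂ] Y) (B : Y →L[ℂ] X)
    (hC : Function.Surjective C) (hB : Function.Injective B)
    (hBC : T = B.comp C)
    (ST : X →L[ℂ] X) (hST : IsWMPIop E H T ST)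
    (SB : X →L[ℂ] Y) (hSB : IsWMPIop E F B SB)
    (SC : Y →L[ℂ] X) (hSC : IsWMPIop F H C SC) :
    ST = SC.comp SB ∧ T.comp ST = B.comp SB ∧ ST.comp T = SC.comp C ∧
    SB = C.comp ST ∧ SC = ST.comp B ∧ T.comp SC = B ∧ SB.comp T = C :=
  factorization_BC_reverse_order_law_general E H F T C B hC hB hBC ST hST SB hSB SC hSC
end
end
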